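/- Let κ be a finite field with q elements and define the finite-field Gauss hypergeometric sum ₂F₁(α,β;γ;x) = (1/(1-q)) ∑_ν ((α)_ν (β)_ν / ((γ)°_ν (ε)°_ν)) ν(x). Assume α + β ≠ γ + ε as multisets of characters (i.e., not {α,β} = {γ,ε}). Then ₂F₁(α,β;γ;1) = g°(γ)·g(γᾱβ̄) / (g°(γᾱ)·g°(γβ̄)). -/

import Mathlib

open scoped BigOperators

namespace KdF

variable {κ : Type*} [Field κ] [Fintype κ] [DecidableEq κ]

noncomputable instance : Fintype (MulChar κ ℂ) := Fintype.ofFinite _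

/-- The Gauss sum `g(φ) = -∑ φ(x) ψ(x)`. -/
noncomputable def g (ψ : AddChar κ ℂ) (φ : MulChar κ ℂ) : ℂ :=
  -∑ x : κ, φ x * ψ x

/-- The variant `g°(φ) = q^{δ(φ)} g(φ)`. -/
noncomputable def gc (ψ : AddChar κ ℂ) (φ : MulChar κ ℂ) : ℂ :=
  (if φ = 1 then (Fintype.card κ : ℂ) else 1) * g ψ φ

/-- Finite-field Pochhammer symbol `(α)_ν = g(αν)/g(α)`. -/
noncomputable def poch (ψ : AddChar κ ℂ) (α ν : MulChar κ ℂ) : ℂ :=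
  g ψ (α * ν) / g ψ α

/-- Variant Pochhammer symbol `(α)°_ν = g°(αν)/g°(α)`. -/
noncomputable def pochc (ψ : AddChar κ ℂ) (α ν : MulChar κ ℂ) : ℂ :=
  gc ψ (α * ν) / gc ψ α

/-- `₁F₀(μ; x)` over the finite field `κ`. -/
noncomputable def F10 (ψ : AddChar κ ℂ) (μ : MulChar κ ℂ) (x : κ) : ℂ :=
  (1 / (1 - (Fintype.card κ : ℂ))) *
    ∑ ν : MulChar κ ℂ, poch ψ μ ν / pochc ψ 1 ν * ν x

/-- `₂F₁(α, β; γ; x)` over the finite field `κ`. -/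
noncomputable def F21 (ψ : AddChar κ ℂ) (α β γ : MulChar κ ℂ) (x : κ) : ℂ :=
  (1 / (1 - (Fintype.card κ : ℂ))) *
    ∑ ν : MulChar κ ℂ,
      poch ψ α ν * poch ψ β ν / (pochc ψ γ ν * pochc ψ 1 ν) * ν x

/-- `₃F₂(α, β, γ; φ, ρ; x)` over the finite field `κ`. -/
noncomputable def F32 (ψ : AddChar κ ℂ) (α β γ φ ρ : MulChar κ ℂ) (x : κ) : ℂ :=
  (1 / (1 - (Fintype.card κ : ℂ))) *
    ∑ ν : MulChar κ ℂ,
      poch ψ α ν * poch ψ β ν * poch ψ γ ν /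
        (pochc ψ φ ν * pochc ψ ρ ν * pochc ψ 1 ν) * ν x

end KdF

open KdF


namespace KdFAux

open Finset KdF

set_option linter.unusedSectionVars false

variable {κ : Type*} [Field κ] [Fintype κ] [DecidableEq κ] (ψ : AddChar κ ℂ)

lemma hero : HasEnoughRootsOfUnity ℂ (Monoid.exponent κˣ) := by
  have : NeZero ((Monoid.exponent κˣ : ℂ)) :=
    ⟨by exact_mod_cast (Monoid.exponent_ne_zero_of_finite (G := κˣ))⟩
  infer_instance

lemma sum_chars (a : κ) :
    ∑ ν : MulChar κ ℂ, ν a = if a = 1 then ((Fintype.card κ : ℂ) - 1) else 0 := by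
  haveI := hero (κ := κ)
  split_ifs with ha
  · subst ha
    simp only [MulChar.map_one, Finset.sum_const, Finset.card_univ, nsmul_eq_mul, mul_one]
    have h1 : Nat.card (MulChar κ ℂ) = Nat.card κˣ :=
      MulChar.card_eq_card_units_of_hasEnoughRootsOfUnity κ ℂ
    rw [← Nat.card_eq_fintype_card, h1, Nat.card_eq_fintype_card, Fintype.card_units,
      Nat.cast_sub Fintype.card_pos, Nat.cast_one]
  · obtain ⟨χ, hχ⟩ := MulChar.exists_apply_ne_one_of_hasEnoughRootsOfUnity κ ℂ ha
    refine eq_zero_of_mul_eq_self_left hχ ?_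
    simp only [Finset.mul_sum, ← MulChar.mul_apply]
    exact Fintype.sum_bijective _ (Group.mulLeft_bijective χ) _ _ fun χ' ↦ rfl

lemma g_eq (φ : MulChar κ ℂ) : g ψ φ = - gaussSum φ ψ := by simp [g, gaussSum]

lemma hq0 : (Fintype.card κ : ℂ) ≠ 0 := Nat.cast_ne_zero.2 Fintype.card_ne_zero

lemma hq1 : (1 : ℂ) - (Fintype.card κ : ℂ) ≠ 0 := by
  intro hc
  rw [sub_eq_zero] at hc
  have : (Fintype.card κ : ℂ) = ((1 : ℕ) : ℂ) := by rw [← hc]; norm_num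
  have := Nat.cast_injective (R := ℂ) this
  exact absurd this (by have := Fintype.one_lt_card (α := κ); omega)

lemma g_one (hψ : ψ ≠ 1) : g ψ (1 : MulChar κ ℂ) = 1 := by
  have h0 : ∑ x : κ, ψ x = 0 := by
    rw [AddChar.sum_eq_zero_iff_ne_zero]
    rw [AddChar.ne_zero_iff]; exact AddChar.ne_one_iff.mp hψ
  have : ∀ x : κ, (1 : MulChar κ ℂ) x * ψ x = ψ x - (if x = 0 then 1 else 0) := by
    intro x
    rcases eq_or_ne x 0 with hx | hx
    · simp [hx, MulChar.map_nonunit _ (by simp : ¬ IsUnit (0:κ))]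
    · simp [hx, MulChar.one_apply (isUnit_iff_ne_zero.2 hx)]
  rw [g, Finset.sum_congr rfl fun x _ => this x, Finset.sum_sub_distrib, h0,
    Finset.sum_ite_eq' univ (0:κ) (fun _ => (1:ℂ))]
  simp

lemma chi_sq (χ : MulChar κ ℂ) : χ (-1) * χ (-1) = 1 := by
  rw [← map_mul, neg_mul_neg, one_mul, MulChar.map_one]

lemma chi_neg_ne (χ : MulChar κ ℂ) : χ (-1) ≠ 0 :=
  fun hc => one_ne_zero (α := ℂ) (by rw [← chi_sq χ, hc, zero_mul])

lemma gc_mul_g_inv (hψ : ψ ≠ 1) (χ : MulChar κ ℂ) :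
    gc ψ χ * g ψ χ⁻¹ = χ (-1) * (Fintype.card κ : ℂ) := by
  rcases eq_or_ne χ 1 with h | h
  · subst h
    rw [gc, if_pos rfl, inv_one, g_one ψ hψ]
    rw [MulChar.one_apply (by simp : IsUnit (-1:κ))]
    ring
  · rw [gc, if_neg h, one_mul, g_eq, g_eq, neg_mul_neg]
    have h1 := gaussSum_mul_gaussSum_eq_card h (AddChar.IsPrimitive.of_ne_one hψ)
    have h2 := mul_gaussSum_inv_eq_gaussSum χ⁻¹ ψ
    have hinv : χ⁻¹ (-1) = χ (-1) := by
      rw [MulChar.inv_apply', inv_neg, inv_one]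
    calc gaussSum χ ψ * gaussSum χ⁻¹ ψ
        = χ⁻¹ (-1) * (gaussSum χ ψ * gaussSum χ⁻¹ ψ⁻¹) := by rw [← h2]; ring
      _ = χ (-1) * (Fintype.card κ : ℂ) := by rw [h1, hinv]

lemma g_ne_zero (hψ : ψ ≠ 1) (χ : MulChar κ ℂ) : g ψ χ ≠ 0 := by
  have := gc_mul_g_inv ψ hψ χ⁻¹
  rw [inv_inv] at this
  have hne : χ⁻¹ (-1) * (Fintype.card κ : ℂ) ≠ 0 :=
    mul_ne_zero (chi_neg_ne _) (hq0 (κ := κ))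
  exact right_ne_zero_of_mul (this ▸ hne)

lemma gc_ne_zero (hψ : ψ ≠ 1) (χ : MulChar κ ℂ) : gc ψ χ ≠ 0 := by
  have := gc_mul_g_inv ψ hψ χ
  have hne : χ (-1) * (Fintype.card κ : ℂ) ≠ 0 :=
    mul_ne_zero (chi_neg_ne _) (hq0 (κ := κ))
  exact left_ne_zero_of_mul (this ▸ hne)

lemma sum_mulShift (χ : MulChar κ ℂ) (c : κ) :
    ∑ x : κ, χ x * ψ (x * c) =
      if c = 0 then (if χ = 1 then (Fintype.card κ : ℂ) - 1 else 0)
      else χ⁻¹ c * (- g ψ χ) := by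
  rcases eq_or_ne c 0 with hc | hc
  · simp only [hc, mul_zero, if_pos, AddChar.map_zero_eq_one, mul_one]
    split_ifs with h1
    · subst h1
      rw [MulChar.sum_one_eq_card_units, Fintype.card_units,
        Nat.cast_sub Fintype.card_pos, Nat.cast_one]
    · exact MulChar.sum_eq_zero_of_ne_one h1
  · rw [if_neg hc]
    have key := Equiv.sum_comp (Equiv.mulRight₀ c⁻¹ (inv_ne_zero hc))
      (fun y => χ y * ψ (y * c))
    rw [← key]
    have : ∀ x : κ, χ ((Equiv.mulRight₀ c⁻¹ (inv_ne_zero hc)) x)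
        * ψ ((Equiv.mulRight₀ c⁻¹ (inv_ne_zero hc)) x * c) = χ⁻¹ c * (χ x * ψ x) := by
      intro x
      show χ (x * c⁻¹) * ψ (x * c⁻¹ * c) = _
      rw [map_mul, mul_assoc x c⁻¹ c, inv_mul_cancel₀ hc, mul_one, MulChar.inv_apply']
      ring
    rw [Finset.sum_congr rfl fun x _ => this x, ← Finset.mul_sum, g, neg_neg]

end KdFAux

namespace KdFAux

open Finset KdF

set_option linter.unusedSectionVars false
set_option maxHeartbeats 1000000

variable {κ : Type*} [Field κ] [Fintype κ] [DecidableEq κ] (ψ : AddChar κ ℂ)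
  (α β γ : MulChar κ ℂ)

/-- integrand of the fourfold sum -/
noncomputable def ff (p : κ × κ × κ × κ) : ℂ :=
  α p.2.2.2 * β p.2.2.1 * γ⁻¹ p.2.1 * ψ (p.2.2.2 + p.2.2.1 + p.2.1 + p.1)

def rr (p : κ × κ × κ × κ) : κ := p.2.2.2 * p.2.2.1 * p.2.1⁻¹ * p.1⁻¹

lemma step1 (ν : MulChar κ ℂ) :
    g ψ (α * ν) * g ψ (β * ν) * g ψ ((γ * ν)⁻¹) * g ψ ν⁻¹
      = ∑ p : κ × κ × κ × κ, ff ψ α β γ p * ν (rr p) := by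
  rw [g, g, g, g,
    show ∀ a b c d : ℂ, (-a) * (-b) * (-c) * (-d) = a * b * c * d from
      fun a b c d => by ring]
  simp only [Fintype.sum_prod_type]
  simp only [Finset.sum_mul, Finset.mul_sum]
  refine Finset.sum_congr rfl fun x _ => Finset.sum_congr rfl fun y _ =>
    Finset.sum_congr rfl fun z _ => Finset.sum_congr rfl fun w _ => ?_
  simp only [ff, rr, MulChar.mul_apply, mul_inv, MulChar.inv_apply', map_mul,
    AddChar.map_add_eq_mul]
  ring

end KdFAux

namespace KdFAux

open Finset KdF

set_option linter.unusedSectionVars false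
set_option maxHeartbeats 1000000

variable {κ : Type*} [Field κ] [Fintype κ] [DecidableEq κ] (ψ : AddChar κ ℂ)
  (α β γ : MulChar κ ℂ)

lemma step2 :
    ∑ ν : MulChar κ ℂ, g ψ (α * ν) * g ψ (β * ν) * g ψ ((γ * ν)⁻¹) * g ψ ν⁻¹
      = ((Fintype.card κ : ℂ) - 1) *
          ∑ p ∈ univ.filter (fun p : κ × κ × κ × κ => rr p = 1), ff ψ α β γ p := by
  calc ∑ ν : MulChar κ ℂ, g ψ (α * ν) * g ψ (β * ν) * g ψ ((γ * ν)⁻¹) * g ψ ν⁻¹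
      = ∑ ν : MulChar κ ℂ, ∑ p : κ × κ × κ × κ, ff ψ α β γ p * ν (rr p) :=
        Finset.sum_congr rfl fun ν _ => step1 ψ α β γ ν
    _ = ∑ p : κ × κ × κ × κ, ∑ ν : MulChar κ ℂ, ff ψ α β γ p * ν (rr p) :=
        Finset.sum_comm
    _ = ∑ p : κ × κ × κ × κ,
          ff ψ α β γ p * (if rr p = 1 then ((Fintype.card κ : ℂ) - 1) else 0) := by
        refine Finset.sum_congr rfl fun p _ => ?_
        rw [← Finset.mul_sum, sum_chars]
    _ = ∑ p ∈ univ.filter (fun p : κ × κ × κ × κ => rr p = 1),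
          ff ψ α β γ p * ((Fintype.card κ : ℂ) - 1) := by
        rw [Finset.sum_filter]
        refine Finset.sum_congr rfl fun p _ => ?_
        split_ifs <;> simp
    _ = ((Fintype.card κ : ℂ) - 1) *
          ∑ p ∈ univ.filter (fun p : κ × κ × κ × κ => rr p = 1), ff ψ α β γ p := by
        rw [Finset.mul_sum]
        exact Finset.sum_congr rfl fun p _ => mul_comm _ _

/-- integrand of the triple sum -/
noncomputable def FF (s : κ × κ × κ) : ℂ :=
  α s.1 * β s.2.1 * γ⁻¹ (s.1 * s.2.2) * ψ (s.1 + s.2.1 + s.1 * s.2.2 + s.2.1 * s.2.2⁻¹)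

lemma step3 :
    ∑ p ∈ univ.filter (fun p : κ × κ × κ × κ => rr p = 1), ff ψ α β γ p
      = ∑ s : κ × κ × κ, FF ψ α β γ s := by
  have h0 : ∀ s : κ × κ × κ, s ∈ (univ : Finset (κ × κ × κ)) → FF ψ α β γ s ≠ 0 →
      (s.1 ≠ 0 ∧ s.2.1 ≠ 0 ∧ s.2.2 ≠ 0) := by
    intro s _ hs
    refine ⟨?_, ?_, ?_⟩ <;> intro hz <;> apply hs
    · simp [FF, hz, MulChar.map_nonunit γ⁻¹ (by simp : ¬ IsUnit (0 : κ))]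
    · simp [FF, hz, MulChar.map_nonunit β (by simp : ¬ IsUnit (0 : κ))]
    · simp [FF, hz, MulChar.map_nonunit γ⁻¹ (by simp : ¬ IsUnit (0 : κ))]
  rw [← Finset.sum_filter_of_ne h0]
  refine Finset.sum_nbij'
    (fun p : κ × κ × κ × κ => ((p.2.2.2, p.2.2.1, p.2.1 * p.2.2.2⁻¹) : κ × κ × κ))
    (fun s : κ × κ × κ => ((s.2.1 * s.2.2⁻¹, s.1 * s.2.2, s.2.1, s.1) : κ × κ × κ × κ))
    ?_ ?_ ?_ ?_ ?_
  · rintro ⟨w, z, y, x⟩ hp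
    simp only [mem_filter, mem_univ, true_and] at hp ⊢; simp only [rr] at hp ⊢
    have hx : x ≠ 0 := fun hc => by simp [hc] at hp
    have hy : y ≠ 0 := fun hc => by simp [hc] at hp
    have hz : z ≠ 0 := fun hc => by simp [hc] at hp
    exact ⟨hx, hy, mul_ne_zero hz (inv_ne_zero hx)⟩
  · rintro ⟨x, y, t⟩ hs
    simp only [mem_filter, mem_univ, true_and] at hs ⊢; simp only [rr] at hs ⊢
    obtain ⟨hx, hy, ht⟩ := hs
    field_simp
  · rintro ⟨w, z, y, x⟩ hp
    simp only [mem_filter, mem_univ, true_and] at hp; simp only [rr] at hp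
    have hx : x ≠ 0 := fun hc => by simp [hc] at hp
    have hy : y ≠ 0 := fun hc => by simp [hc] at hp
    have hz : z ≠ 0 := fun hc => by simp [hc] at hp
    have hw : w ≠ 0 := fun hc => by simp [hc] at hp
    field_simp at hp
    have e1 : y * (z * x⁻¹)⁻¹ = w := by field_simp; linear_combination hp
    have e2 : x * (z * x⁻¹) = z := by field_simp
    show ((y * (z * x⁻¹)⁻¹, x * (z * x⁻¹), y, x) : κ × κ × κ × κ) = (w, z, y, x)
    rw [e1, e2]
  · rintro ⟨x, y, t⟩ hs
    simp only [mem_filter, mem_univ, true_and] at hs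
    obtain ⟨hx, hy, ht⟩ := hs
    have e : x * t * x⁻¹ = t := by field_simp
    show ((x, y, x * t * x⁻¹) : κ × κ × κ) = (x, y, t)
    rw [e]
  · rintro ⟨w, z, y, x⟩ hp
    simp only [mem_filter, mem_univ, true_and] at hp; simp only [rr] at hp
    have hx : x ≠ 0 := fun hc => by simp [hc] at hp
    have hy : y ≠ 0 := fun hc => by simp [hc] at hp
    have hz : z ≠ 0 := fun hc => by simp [hc] at hp
    have hw : w ≠ 0 := fun hc => by simp [hc] at hp
    field_simp at hp
    have e1 : y * (z * x⁻¹)⁻¹ = w := by field_simp; linear_combination hp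
    have e2 : x * (z * x⁻¹) = z := by field_simp
    simp only [ff, FF]
    rw [e1, e2]

end KdFAux

namespace KdFAux

open Finset KdF

set_option linter.unusedSectionVars false
set_option maxHeartbeats 1000000

variable {κ : Type*} [Field κ] [Fintype κ] [DecidableEq κ] (ψ : AddChar κ ℂ)
  (α β γ : MulChar κ ℂ)

lemma step4 :
    ∑ s : κ × κ × κ, FF ψ α β γ s
      = ∑ t : κ, γ⁻¹ t * (∑ x : κ, (α * γ⁻¹) x * ψ (x * (1 + t)))
          * (∑ y : κ, β y * ψ (y * (1 + t⁻¹))) := by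
  have key : ∀ t x y : κ, FF ψ α β γ (x, y, t)
      = γ⁻¹ t * ((α * γ⁻¹) x * ψ (x * (1 + t))) * (β y * ψ (y * (1 + t⁻¹))) := by
    intro t x y
    simp only [FF, MulChar.mul_apply, map_mul]
    rw [show x + y + x * t + y * t⁻¹ = x * (1 + t) + y * (1 + t⁻¹) from by ring,
      AddChar.map_add_eq_mul]
    ring
  calc ∑ s : κ × κ × κ, FF ψ α β γ s
      = ∑ x : κ, ∑ y : κ, ∑ t : κ, FF ψ α β γ (x, y, t) := by
        simp only [Fintype.sum_prod_type]
    _ = ∑ x : κ, ∑ t : κ, ∑ y : κ, FF ψ α β γ (x, y, t) :=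
        Finset.sum_congr rfl fun x _ => Finset.sum_comm
    _ = ∑ t : κ, ∑ x : κ, ∑ y : κ, FF ψ α β γ (x, y, t) := Finset.sum_comm
    _ = ∑ t : κ, γ⁻¹ t * (∑ x : κ, (α * γ⁻¹) x * ψ (x * (1 + t)))
          * (∑ y : κ, β y * ψ (y * (1 + t⁻¹))) := by
        refine Finset.sum_congr rfl fun t _ => ?_
        rw [Finset.sum_congr rfl fun x _ => Finset.sum_congr rfl fun y _ => key t x y]
        simp only [← Finset.mul_sum, ← Finset.sum_mul]

end KdFAux

namespace KdFAux

open Finset KdF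

set_option linter.unusedSectionVars false
set_option maxHeartbeats 1000000

variable {κ : Type*} [Field κ] [Fintype κ] [DecidableEq κ] (ψ : AddChar κ ℂ)
  (α β γ : MulChar κ ℂ)

lemma step5 (h2 : ¬(α = γ ∧ β = 1)) :
    ∑ t : κ, γ⁻¹ t * (∑ x : κ, (α * γ⁻¹) x * ψ (x * (1 + t)))
        * (∑ y : κ, β y * ψ (y * (1 + t⁻¹)))
      = g ψ (α * γ⁻¹) * g ψ β *
          ∑ t : κ, (β * γ⁻¹) t * ((γ * α⁻¹ * β⁻¹) (1 + t)) := by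
  have key : ∀ t : κ, γ⁻¹ t * (∑ x : κ, (α * γ⁻¹) x * ψ (x * (1 + t)))
        * (∑ y : κ, β y * ψ (y * (1 + t⁻¹)))
      = g ψ (α * γ⁻¹) * g ψ β * ((β * γ⁻¹) t * ((γ * α⁻¹ * β⁻¹) (1 + t))) := by
    intro t
    rw [sum_mulShift ψ (α * γ⁻¹) (1 + t), sum_mulShift ψ β (1 + t⁻¹)]
    by_cases ht : t = -1
    · subst ht
      have e0 : (1 : κ) + (-1) = 0 := by ring
      have e1 : ((-1 : κ))⁻¹ = -1 := by rw [inv_neg, inv_one]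
      rw [e1, e0, if_pos rfl, if_pos rfl, MulChar.map_nonunit (γ * α⁻¹ * β⁻¹)
        (by simp : ¬ IsUnit (0 : κ))]
      rcases eq_or_ne (α * γ⁻¹) 1 with hag | hag
      · have hb : β ≠ 1 := fun hb => h2 ⟨mul_inv_eq_one.mp hag, hb⟩
        rw [if_pos hag, if_neg hb]
        ring
      · rw [if_neg hag]
        ring
    · by_cases ht0 : t = 0
      · subst ht0
        rw [MulChar.map_nonunit γ⁻¹ (by simp : ¬ IsUnit (0 : κ)),
          MulChar.map_nonunit (β * γ⁻¹) (by simp : ¬ IsUnit (0 : κ))]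
        ring
      · have h1t : (1 : κ) + t ≠ 0 := fun hc => ht (by linear_combination hc)
        have e : (1 : κ) + t⁻¹ = (1 + t) * t⁻¹ := by field_simp; ring
        have h2t : (1 : κ) + t⁻¹ ≠ 0 := by
          rw [e]; exact mul_ne_zero h1t (inv_ne_zero ht0)
        rw [if_neg h1t, if_neg h2t, e]
        simp only [mul_inv, MulChar.mul_apply, MulChar.inv_apply', map_mul, inv_inv]
        ring
  rw [Finset.sum_congr rfl fun t _ => key t, ← Finset.mul_sum]

lemma step6 :
    ∑ t : κ, (β * γ⁻¹) t * ((γ * α⁻¹ * β⁻¹) (1 + t))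
      = (β * γ⁻¹) (-1) * jacobiSum (β * γ⁻¹) (γ * α⁻¹ * β⁻¹) := by
  have key := Equiv.sum_comp (Equiv.neg κ)
    (fun t => (β * γ⁻¹) t * ((γ * α⁻¹ * β⁻¹) (1 + t)))
  rw [← key]
  simp only [Equiv.neg_apply]
  simp only [jacobiSum, Finset.mul_sum]
  refine Finset.sum_congr rfl fun t _ => ?_
  rw [show (1 : κ) + -t = 1 - t from by ring, show (-t : κ) = -1 * t from by ring, map_mul]
  ring

lemma key_sum (h2 : ¬(α = γ ∧ β = 1)) :
    ∑ ν : MulChar κ ℂ, g ψ (α * ν) * g ψ (β * ν) * g ψ ((γ * ν)⁻¹) * g ψ ν⁻¹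
      = ((Fintype.card κ : ℂ) - 1) * (g ψ (α * γ⁻¹) * g ψ β *
          ((β * γ⁻¹) (-1) * jacobiSum (β * γ⁻¹) (γ * α⁻¹ * β⁻¹))) := by
  rw [step2, step3, step4, step5 ψ α β γ h2, step6]

end KdFAux

namespace KdFAux

open Finset KdF

set_option linter.unusedSectionVars false
set_option maxHeartbeats 1000000

variable {κ : Type*} [Field κ] [Fintype κ] [DecidableEq κ] (ψ : AddChar κ ℂ)
  (α β γ : MulChar κ ℂ)

lemma inv_neg_one' (χ : MulChar κ ℂ) : χ⁻¹ (-1) = χ (-1) := by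
  rw [MulChar.inv_apply', inv_neg, inv_one]

lemma sign_cases (χ : MulChar κ ℂ) : χ (-1) = 1 ∨ χ (-1) = -1 :=
  mul_self_eq_one_iff.mp (chi_sq χ)

lemma div_neg_one (χ φ : MulChar κ ℂ) : (χ / φ) (-1) = χ (-1) * φ (-1) := by
  rw [div_eq_mul_inv, MulChar.mul_apply, inv_neg_one']

lemma hterm (hψ : ψ ≠ 1) (ν : MulChar κ ℂ) :
    poch ψ α ν * poch ψ β ν / (pochc ψ γ ν * pochc ψ 1 ν) * ν 1
      = (gc ψ γ * γ (-1) / (g ψ α * g ψ β * (Fintype.card κ : ℂ))) *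
        (g ψ (α * ν) * g ψ (β * ν) * g ψ ((γ * ν)⁻¹) * g ψ ν⁻¹) := by
  rw [MulChar.map_one, mul_one]
  simp only [poch, pochc, one_mul]
  have hgc1 : gc ψ (1 : MulChar κ ℂ) = (Fintype.card κ : ℂ) := by
    rw [gc, if_pos rfl, g_one ψ hψ, mul_one]
  rw [hgc1]
  have e1 : g ψ ((γ * ν)⁻¹) = (γ * ν) (-1) * (Fintype.card κ : ℂ) / gc ψ (γ * ν) := by
    rw [eq_div_iff (gc_ne_zero ψ hψ _), mul_comm]; exact gc_mul_g_inv ψ hψ (γ * ν)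
  have e2 : g ψ ν⁻¹ = ν (-1) * (Fintype.card κ : ℂ) / gc ψ ν := by
    rw [eq_div_iff (gc_ne_zero ψ hψ _), mul_comm]; exact gc_mul_g_inv ψ hψ ν
  rw [e1, e2]
  simp only [MulChar.mul_apply]
  have h1 := g_ne_zero ψ hψ α
  have h2 := g_ne_zero ψ hψ β
  have h3 := gc_ne_zero ψ hψ (γ * ν)
  have h4 := gc_ne_zero ψ hψ ν
  have hq := hq0 (κ := κ)
  field_simp
  rcases sign_cases γ with hg | hg <;> rcases sign_cases ν with hn | hn <;>
    rw [hg, hn] <;> ring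

end KdFAux

set_option maxHeartbeats 2000000 in
open Finset KdF KdFAux in
theorem stmt {κ : Type*} [Field κ] [Fintype κ] [DecidableEq κ]
    (ψ : AddChar κ ℂ) (hψ : ψ ≠ 1) (α β γ : MulChar κ ℂ)
    (h : ({α, β} : Multiset (MulChar κ ℂ)) ≠ {γ, 1}) :
    F21 ψ α β γ 1 =
      gc ψ γ * g ψ (γ * α⁻¹ * β⁻¹) / (gc ψ (γ * α⁻¹) * gc ψ (γ * β⁻¹)) := by
  classical
  have h2 : ¬(α = γ ∧ β = 1) := by
    rintro ⟨ha, hb⟩; exact h (by rw [ha, hb])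
  have hgα := g_ne_zero ψ hψ α
  have hgβ := g_ne_zero ψ hψ β
  have hq := hq0 (κ := κ)
  have hq1' := hq1 (κ := κ)
  have hgcγ := gc_ne_zero ψ hψ γ
  have hgcga := gc_ne_zero ψ hψ (γ * α⁻¹)
  have hgcgb := gc_ne_zero ψ hψ (γ * β⁻¹)
  have c1 := chi_neg_ne (κ := κ) γ
  have c2 := chi_neg_ne (κ := κ) α
  have c3 := chi_neg_ne (κ := κ) β
  have c4 := chi_neg_ne (κ := κ) (β * γ⁻¹)
  have c5 := chi_neg_ne (κ := κ) (γ * β⁻¹)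
  have c6 := chi_neg_ne (κ := κ) (γ * α⁻¹)
  have hgcgb' : gc ψ (γ / β) ≠ 0 := by rw [div_eq_mul_inv]; exact hgcgb
  have hgcga' : gc ψ (γ / α) ≠ 0 := by rw [div_eq_mul_inv]; exact hgcga
  rw [F21, Finset.sum_congr rfl fun ν _ => hterm ψ α β γ hψ ν, ← Finset.mul_sum,
    key_sum ψ α β γ h2]
  rw [show ∀ K W : ℂ, 1 / (1 - (Fintype.card κ : ℂ)) * (K * (((Fintype.card κ : ℂ) - 1) * W))
      = -(K * W) from fun K W => by
    field_simp
    ring]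
  -- relations
  have hga : (γ * α⁻¹)⁻¹ = α * γ⁻¹ := by group
  have hgb : (γ * β⁻¹)⁻¹ = β * γ⁻¹ := by group
  have R1 : gc ψ (γ * α⁻¹) * g ψ (α * γ⁻¹) = (γ * α⁻¹) (-1) * (Fintype.card κ : ℂ) := by
    have := gc_mul_g_inv ψ hψ (γ * α⁻¹); rwa [hga] at this
  have e1 : g ψ (α * γ⁻¹) = (γ * α⁻¹) (-1) * (Fintype.card κ : ℂ) / gc ψ (γ * α⁻¹) := by
    rw [eq_div_iff hgcga, mul_comm]; exact R1
  have e2 : g ψ (β * γ⁻¹) = (γ * β⁻¹) (-1) * (Fintype.card κ : ℂ) / gc ψ (γ * β⁻¹) := by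
    rw [eq_div_iff hgcgb, mul_comm]
    have := gc_mul_g_inv ψ hψ (γ * β⁻¹); rwa [hgb] at this
  rcases eq_or_ne α 1 with hα | hα
  · -- case α = 1
    subst hα
    have hχ1 : β * γ⁻¹ ≠ 1 := by
      intro hc
      have hbg : β = γ := mul_inv_eq_one.mp hc
      exact h (by rw [hbg]; exact Multiset.cons_swap 1 γ 0)
    have hρ : γ * (1 : MulChar κ ℂ)⁻¹ * β⁻¹ = (β * γ⁻¹)⁻¹ := by group
    have hJ : jacobiSum (β * γ⁻¹) (γ * (1 : MulChar κ ℂ)⁻¹ * β⁻¹)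
        = -(β * γ⁻¹) (-1) := by
      rw [hρ]; exact jacobiSum_nontrivial_inv hχ1
    have e6 : g ψ ((1 : MulChar κ ℂ) * γ⁻¹) = γ (-1) * (Fintype.card κ : ℂ) / gc ψ γ := by
      rw [one_mul, eq_div_iff hgcγ, mul_comm]; exact gc_mul_g_inv ψ hψ γ
    have e5 : g ψ (γ * (1 : MulChar κ ℂ)⁻¹ * β⁻¹)
        = (β * γ⁻¹) (-1) * (Fintype.card κ : ℂ) / g ψ (β * γ⁻¹) := by
      rw [eq_div_iff (g_ne_zero ψ hψ _), mul_comm, hρ]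
      have : gc ψ (β * γ⁻¹) = g ψ (β * γ⁻¹) := by rw [gc, if_neg hχ1, one_mul]
      rw [← this]
      exact gc_mul_g_inv ψ hψ (β * γ⁻¹)
    have hga1 : γ * (1 : MulChar κ ℂ)⁻¹ = γ := by group
    rw [hJ, e5, e2, hga1, g_one ψ hψ, e6]
    field_simp [div_neg_one, inv_neg_one', MulChar.mul_apply, hgβ, hq, hq1', hgcγ,
      hgcgb, hgcgb', c1, c3]
    rcases sign_cases β with hb | hb <;> rcases sign_cases γ with hg | hg <;>
      simp only [MulChar.mul_apply, inv_neg_one', hb, hg] <;> field_simp <;> ring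
  · -- case α ≠ 1
    have hcr : (β * γ⁻¹) * (γ * α⁻¹ * β⁻¹) = α⁻¹ := by
      rw [mul_assoc γ α⁻¹ β⁻¹, mul_assoc β γ⁻¹, inv_mul_cancel_left,
        mul_left_comm β α⁻¹ β⁻¹, mul_inv_cancel, mul_one]
    have hne : (β * γ⁻¹) * (γ * α⁻¹ * β⁻¹) ≠ 1 := by
      rw [hcr]; exact fun hc => hα (by rwa [inv_eq_one] at hc)
    have hj := jacobiSum_mul_nontrivial hne ψ
    rw [hcr] at hj
    have hginv : g ψ α⁻¹ ≠ 0 := g_ne_zero ψ hψ α⁻¹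
    have hJ : jacobiSum (β * γ⁻¹) (γ * α⁻¹ * β⁻¹)
        = g ψ (β * γ⁻¹) * g ψ (γ * α⁻¹ * β⁻¹) / (- g ψ α⁻¹) := by
      rw [eq_div_iff (neg_ne_zero.mpr hginv)]
      have hg1 : gaussSum α⁻¹ ψ = - g ψ α⁻¹ := by rw [g_eq, neg_neg]
      have hg2 : gaussSum (β * γ⁻¹) ψ = - g ψ (β * γ⁻¹) := by rw [g_eq, neg_neg]
      have hg3 : gaussSum (γ * α⁻¹ * β⁻¹) ψ = - g ψ (γ * α⁻¹ * β⁻¹) := by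
        rw [g_eq, neg_neg]
      rw [hg1, hg2, hg3] at hj
      linear_combination hj
    have e4 : g ψ α⁻¹ = α (-1) * (Fintype.card κ : ℂ) / g ψ α := by
      rw [eq_div_iff hgα, mul_comm]
      have := gc_mul_g_inv ψ hψ α
      rwa [gc, if_neg hα, one_mul] at this
    have hgρ := g_ne_zero ψ hψ (γ * α⁻¹ * β⁻¹)
    rw [hJ, e4, e1, e2]
    field_simp [div_neg_one, inv_neg_one', MulChar.mul_apply, hgα, hgβ, hq, hq1', hgcγ,
      hgcga, hgcgb, hgcga', hgcgb', c1, c2, c3, hgρ]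
    rcases sign_cases α with ha | ha <;> rcases sign_cases β with hb | hb <;>
      rcases sign_cases γ with hg | hg <;> simp only [MulChar.mul_apply, inv_neg_one', ha, hb, hg] <;> field_simp <;> ring
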